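/- arXiv:2101.03859 — 2 statements merged into one kernel-verified Lean document; each statement's English description precedes it below -/
import Mathlib

section
/- Exact Dirichlet energy of the bubble on a disc: for every λ > 0 and δ > 0, ∫_{{x ∈ ℝ² : ‖x‖ < δ}} (4λ²‖x‖/(1 + λ²‖x‖²))² dx = 16π·( ln(1 + λ²δ²) + 1/(1 + λ²δ²) − 1 ), where dx is Lebesgue measure on ℝ². -/
/-!
In polar coordinates the integral becomes `2π ∫₀^δ r (4λ²r / (1 + λ²r²))² dr`, and the radial
integrand is the derivative of `8 (log (1 + λ²r²) + 1 / (1 + λ²r²))`.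
-/

open Real MeasureTheory Metric Set

namespace MeasureTheory

variable {E F : Type*} [NormedAddCommGroup E] [NormedSpace ℝ E] [FiniteDimensional ℝ E]
  [MeasurableSpace E] [BorelSpace E] [NormedAddCommGroup F] [NormedSpace ℝ F]

theorem setIntegral_ball_fun_norm_addHaar [Nontrivial E] (μ : Measure E) [μ.IsAddHaarMeasure]
    (f : ℝ → F) {δ : ℝ} (hδ : 0 ≤ δ) :
    ∫ x in ball 0 δ, f ‖x‖ ∂μ = Module.finrank ℝ E • μ.real (ball 0 1) •
      ∫ r in 0..δ, r ^ (Module.finrank ℝ E - 1) • f r := by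
  have h_ind (x : E) : (ball 0 δ).indicator (fun x ↦ f ‖x‖) x = (Iio δ).indicator f ‖x‖ := by
    simp only [indicator, mem_ball, dist_zero_right, mem_Iio]
  rw [← integral_indicator measurableSet_ball]
  simp only [h_ind]
  rw [integral_fun_norm_addHaar μ]
  simp only [← indicator_smul_apply (Iio δ) fun r ↦ r ^ (Module.finrank ℝ E - 1)]
  rw [integral_indicator measurableSet_Iio, Measure.restrict_restrict measurableSet_Iio,
    Iio_inter_Ioi, ← integral_Ioc_eq_integral_Ioo, ← intervalIntegral.integral_of_le hδ]

theorem setIntegral_ball_fun_norm_fin_two (f : ℝ → F) {δ : ℝ} (hδ : 0 ≤ δ) :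
    ∫ x in ball (0 : EuclideanSpace ℝ (Fin 2)) δ, f ‖x‖ = (2 * π) • ∫ r in 0..δ, r • f r := by
  rw [setIntegral_ball_fun_norm_addHaar volume f hδ, finrank_euclideanSpace_fin,
    measureReal_def, EuclideanSpace.volume_ball_fin_two, ← smul_smul, ← Nat.cast_smul_eq_nsmul ℝ]
  simp [ENNReal.toReal_ofReal pi_pos.le]

end MeasureTheory

theorem hasDerivAt_log_one_add_mul_sq_add_inv {a : ℝ} (ha : 0 ≤ a) (r : ℝ) :
    HasDerivAt (fun r ↦ 8 * (log (1 + a * r ^ 2) + (1 + a * r ^ 2)⁻¹))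
      (r * (4 * a * r / (1 + a * r ^ 2)) ^ 2) r := by
  have hpos : 0 < 1 + a * r ^ 2 := by positivity
  have hq : HasDerivAt (fun r : ℝ ↦ 1 + a * r ^ 2) (a * (2 * r)) r := by
    simpa using ((hasDerivAt_pow 2 r).const_mul a).const_add 1
  refine (((hq.log hpos.ne').add (hq.inv hpos.ne')).const_mul 8).congr_deriv ?_
  field_simp
  ring

theorem integral_mul_div_one_add_mul_sq_sq {a : ℝ} (ha : 0 ≤ a) (δ : ℝ) :
    ∫ r in 0..δ, r * (4 * a * r / (1 + a * r ^ 2)) ^ 2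
      = 8 * (log (1 + a * δ ^ 2) + 1 / (1 + a * δ ^ 2) - 1) := by
  have hcont : Continuous fun r : ℝ ↦ r * (4 * a * r / (1 + a * r ^ 2)) ^ 2 := by
    fun_prop (disch := intro; positivity)
  rw [intervalIntegral.integral_eq_sub_of_hasDerivAt
    (fun r _ ↦ hasDerivAt_log_one_add_mul_sq_add_inv ha r) (hcont.intervalIntegrable 0 δ)]
  norm_num
  ring

theorem stmt3_general (lam δ : ℝ) (hδ : 0 < δ) :
    ∫ x in Metric.ball (0 : EuclideanSpace ℝ (Fin 2)) δ,
        (4 * lam ^ 2 * ‖x‖ / (1 + lam ^ 2 * ‖x‖ ^ 2)) ^ 2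
      = 16 * π * (Real.log (1 + lam ^ 2 * δ ^ 2) + 1 / (1 + lam ^ 2 * δ ^ 2) - 1) := by
  rw [setIntegral_ball_fun_norm_fin_two (fun r ↦ (4 * lam ^ 2 * r / (1 + lam ^ 2 * r ^ 2)) ^ 2)
    hδ.le]
  simp only [smul_eq_mul]
  rw [integral_mul_div_one_add_mul_sq_sq (sq_nonneg lam)]
  ring

theorem stmt3 (lam δ : ℝ) (hlam : 0 < lam) (hδ : 0 < δ) :
    ∫ x in Metric.ball (0 : EuclideanSpace ℝ (Fin 2)) δ,
        (4 * lam ^ 2 * ‖x‖ / (1 + lam ^ 2 * ‖x‖ ^ 2)) ^ 2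
      = 16 * π * (Real.log (1 + lam ^ 2 * δ ^ 2) + 1 / (1 + lam ^ 2 * δ ^ 2) - 1) :=
  stmt3_general lam δ hδ
end

section
/- Logarithmic growth of the bubble energy: for every δ > 0 and every λ ≥ 1, ∫_{{x ∈ ℝ² : ‖x‖ < δ}} (4λ²‖x‖/(1 + λ²‖x‖²))² dx ≤ 32π·ln λ + 16π·ln(1 + δ²). -/
/-!
In polar coordinates the energy becomes `2π ∫₀^δ r (4λ²r / (1 + λ²r²))² dr`, and the integrand
has the explicit primitive `8 (log (1 + λ²r²) + (1 + λ²r²)⁻¹)`. Dropping the negative term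
`8 (1 + λ²δ²)⁻¹ - 8` leaves `16π log (1 + λ²δ²)`, and `1 + λ²δ² ≤ λ² (1 + δ²)` for `λ ≥ 1`.
-/

open Real MeasureTheory Set Metric

theorem integral_ball_fun_norm_addHaar {E F : Type*} [NormedAddCommGroup E] [NormedSpace ℝ E]
    [MeasurableSpace E] [BorelSpace E] [FiniteDimensional ℝ E] [Nontrivial E]
    [NormedAddCommGroup F] [NormedSpace ℝ F] (μ : Measure E) [μ.IsAddHaarMeasure]
    (f : ℝ → F) (r : ℝ) :
    ∫ x in ball (0 : E) r, f ‖x‖ ∂μ = Module.finrank ℝ E • μ.real (ball 0 1) •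
      ∫ y in Ioo 0 r, y ^ (Module.finrank ℝ E - 1) • f y := by
  have hball : ∫ x in ball (0 : E) r, f ‖x‖ ∂μ = ∫ x, (Iio r).indicator f ‖x‖ ∂μ := by
    rw [← integral_indicator measurableSet_ball]
    congr 1 with x
    by_cases hx : ‖x‖ < r <;> simp [indicator, hx]
  have hIoo : ∫ y in Ioi 0, y ^ (Module.finrank ℝ E - 1) • (Iio r).indicator f y
      = ∫ y in Ioo 0 r, y ^ (Module.finrank ℝ E - 1) • f y := by
    have hsmul : ∀ y : ℝ, y ^ (Module.finrank ℝ E - 1) • (Iio r).indicator f y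
        = (Iio r).indicator (fun y => y ^ (Module.finrank ℝ E - 1) • f y) y :=
      fun y => (indicator_smul_apply (Iio r) (· ^ (Module.finrank ℝ E - 1)) f y).symm
    rw [funext hsmul, integral_indicator measurableSet_Iio,
      Measure.restrict_restrict measurableSet_Iio, Iio_inter_Ioi]
  rw [hball, integral_fun_norm_addHaar, hIoo]

theorem integral_ball_fin_two_fun_norm (f : ℝ → ℝ) (r : ℝ) :
    ∫ x in ball (0 : EuclideanSpace ℝ (Fin 2)) r, f ‖x‖ = 2 * π * ∫ y in Ioo 0 r, y * f y := by
  rw [integral_ball_fun_norm_addHaar, finrank_euclideanSpace_fin, measureReal_def,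
    EuclideanSpace.volume_ball_fin_two, ENNReal.toReal_mul, ENNReal.toReal_ofReal pi_pos.le]
  simp [mul_assoc]

theorem hasDerivAt_bubble_energy_primitive (lam y : ℝ) :
    HasDerivAt (fun r : ℝ => 8 * (log (1 + lam ^ 2 * r ^ 2) + (1 + lam ^ 2 * r ^ 2)⁻¹))
      (y * (4 * lam ^ 2 * y / (1 + lam ^ 2 * y ^ 2)) ^ 2) y := by
  have hpos : 0 < 1 + lam ^ 2 * y ^ 2 := by positivity
  have hu : HasDerivAt (fun r : ℝ => 1 + lam ^ 2 * r ^ 2) (lam ^ 2 * (2 * y)) y := by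
    simpa using ((hasDerivAt_pow 2 y).const_mul (lam ^ 2)).const_add 1
  refine (((hasDerivAt_log hpos.ne').comp y hu).add (hu.inv hpos.ne')).const_mul 8
    |>.congr_deriv ?_
  field_simp
  ring

theorem integral_Ioo_bubble_energy (lam δ : ℝ) (hδ : 0 ≤ δ) :
    ∫ y in Ioo 0 δ, y * (4 * lam ^ 2 * y / (1 + lam ^ 2 * y ^ 2)) ^ 2
      = 8 * log (1 + lam ^ 2 * δ ^ 2) + 8 * (1 + lam ^ 2 * δ ^ 2)⁻¹ - 8 := by
  have hcont : Continuous fun y : ℝ => y * (4 * lam ^ 2 * y / (1 + lam ^ 2 * y ^ 2)) ^ 2 :=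
    continuous_id.mul <| (Continuous.div (by fun_prop) (by fun_prop) fun y => by positivity).pow 2
  rw [← integral_Ioc_eq_integral_Ioo, ← intervalIntegral.integral_of_le hδ,
    intervalIntegral.integral_eq_sub_of_hasDerivAt
      (fun y _ => hasDerivAt_bubble_energy_primitive lam y) (hcont.intervalIntegrable 0 δ)]
  simp only [ne_eq, OfNat.ofNat_ne_zero, not_false_eq_true, zero_pow, mul_zero, add_zero, log_one,
    inv_one]
  ring

theorem log_one_add_mul_le {a b : ℝ} (ha : 1 ≤ a) (hb : 0 ≤ b) :
    log (1 + a * b) ≤ log a + log (1 + b) := by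
  rw [← log_mul (by positivity) (by positivity)]
  exact log_le_log (by positivity) (by nlinarith)

theorem stmt4 (δ lam : ℝ) (hδ : 0 < δ) (hlam : 1 ≤ lam) :
    ∫ x in Metric.ball (0 : EuclideanSpace ℝ (Fin 2)) δ,
        (4 * lam ^ 2 * ‖x‖ / (1 + lam ^ 2 * ‖x‖ ^ 2)) ^ 2
      ≤ 32 * π * Real.log lam + 16 * π * Real.log (1 + δ ^ 2) := by
  rw [integral_ball_fin_two_fun_norm (fun r => (4 * lam ^ 2 * r / (1 + lam ^ 2 * r ^ 2)) ^ 2),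
    integral_Ioo_bubble_energy lam δ hδ.le]
  have hinv : (1 + lam ^ 2 * δ ^ 2)⁻¹ ≤ 1 := inv_le_one_of_one_le₀ (le_add_of_nonneg_right (by positivity))
  have hlog : log (1 + lam ^ 2 * δ ^ 2) ≤ 2 * log lam + log (1 + δ ^ 2) := by
    simpa [log_pow] using log_one_add_mul_le (one_le_pow₀ hlam (n := 2)) (sq_nonneg δ)
  nlinarith [pi_pos]
end
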